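/- Let F be a finite field with q ≤ 11 elements, U = {s ∈ F : X² - sX + 1 is irreducible over F}, and V = U ∪ {2, -2}. Then V + V = F. -/
import Mathlib


open Polynomial Pointwise

/-- For a finite field `F` with `2 ≤ #F ≤ 11`, setting
`U = {s | X² - sX + 1 irreducible over F}` and `V = U ∪ {2, -2}`, we have `V + V = F`. -/
theorem stmt3 {F : Type*} [Field F] [Fintype F]
    (hcard : 2 ≤ Fintype.card F) (hcard' : Fintype.card F ≤ 11)
    (U V : Set F)
    (hU : U = {s : F | Irreducible (X ^ 2 - C s * X + 1 : F[X])})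
    (hV : V = U ∪ {(2 : F), (-2 : F)}) :
    V + V = (Set.univ : Set F) := by
  classical
  have key : ∀ s : F, s ∉ V → ∃ x : F, (x ≠ 0 ∧ x ≠ 1 ∧ x ≠ -1) ∧ x + x⁻¹ = s := by
    intro s hs
    rw [hV, Set.mem_union, hU] at hs
    push_neg at hs
    obtain ⟨h1, h2⟩ := hs
    simp only [Set.mem_setOf_eq] at h1
    simp only [Set.mem_insert_iff, Set.mem_singleton_iff] at h2
    push_neg at h2
    have hm : (X ^ 2 - C s * X + 1 : F[X]).Monic := by monicity!
    have hnd : (X ^ 2 - C s * X + 1 : F[X]).natDegree = 2 := by compute_degree!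
    obtain ⟨c₁, c₂, hc0, hc1⟩ := (hm.not_irreducible_iff_exists_add_mul_eq_coeff hnd).mp h1
    simp only [coeff_add, coeff_sub, coeff_X_pow, coeff_one, coeff_C_mul, coeff_X] at hc0 hc1
    norm_num at hc0 hc1
    have hc1ne : c₁ ≠ 0 := by rintro rfl; simp at hc0
    have hinv : (-c₁)⁻¹ = -c₂ := inv_eq_of_mul_eq_one_right (by rw [neg_mul_neg, ← hc0])
    refine ⟨-c₁, ⟨by simpa using hc1ne, ?_, ?_⟩, ?_⟩
    · intro h
      have hc1' : c₁ = -1 := by linear_combination -h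
      have hc2' : c₂ = -1 := by
        have := hc0; rw [hc1'] at this; linear_combination this
      exact h2.1 (by linear_combination -hc1 - hc1' - hc2')
    · intro h
      have hc1' : c₁ = 1 := by linear_combination -h
      have hc2' : c₂ = 1 := by
        have := hc0; rw [hc1'] at this; linear_combination -this
      exact h2.2 (by linear_combination -hc1 - hc1' - hc2')
    · rw [hinv]; linear_combination hc1
  set S : Finset F := Finset.univ.filter (fun x => x ≠ 0 ∧ x ≠ 1 ∧ x ≠ -1) with hS
  set W : Finset F := S.image (fun x => x + x⁻¹) with hW
  set Vf : Finset F := V.toFinset with hVf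
  have hcompl : Vfᶜ ⊆ W := by
    intro s hs
    rw [Finset.mem_compl, hVf, Set.mem_toFinset] at hs
    obtain ⟨x, hx, hxs⟩ := key s hs
    exact Finset.mem_image.mpr ⟨x, by simp [hS, hx.1, hx.2.1, hx.2.2], hxs⟩
  have hfib : ∀ w ∈ W, 2 ≤ (S.filter (fun x => x + x⁻¹ = w)).card := by
    intro w hw
    obtain ⟨x, hxS, hxw⟩ := Finset.mem_image.mp hw
    obtain ⟨hx0, hx1, hxm1⟩ := (Finset.mem_filter.mp hxS).2
    have hxinv0 : x⁻¹ ≠ 0 := inv_ne_zero hx0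
    have hxinv1 : x⁻¹ ≠ 1 := by
      intro h; exact hx1 (by rw [← inv_inv x, h, inv_one])
    have hxinvm1 : x⁻¹ ≠ -1 := by
      intro h; exact hxm1 (by rw [← inv_inv x, h]; norm_num)
    have hxinvS : x⁻¹ ∈ S := by
      rw [hS, Finset.mem_filter]; exact ⟨Finset.mem_univ _, hxinv0, hxinv1, hxinvm1⟩
    have hxne : x ≠ x⁻¹ := by
      intro h
      have : x * x = 1 := by nth_rewrite 2 [h]; exact mul_inv_cancel₀ hx0
      rcases mul_self_eq_one_iff.mp this with h' | h' <;> [exact hx1 h'; exact hxm1 h']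
    refine Finset.one_lt_card.mpr ⟨x, ?_, x⁻¹, ?_, hxne⟩
    · exact Finset.mem_filter.mpr ⟨hxS, hxw⟩
    · refine Finset.mem_filter.mpr ⟨hxinvS, ?_⟩
      rw [inv_inv, add_comm]; exact hxw
  have hWS : 2 * W.card ≤ S.card := by
    rw [Finset.card_eq_sum_card_image (fun x => x + x⁻¹) S]
    calc 2 * W.card = W.card • 2 := by rw [smul_eq_mul]; ring
    _ ≤ _ := Finset.card_nsmul_le_sum W _ 2 hfib
  have hScard : S.card + 2 ≤ Fintype.card F := by
    have hsub : ({0, 1} : Finset F) ⊆ Sᶜ := by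
      intro x hx
      simp only [Finset.mem_insert, Finset.mem_singleton] at hx
      rw [Finset.mem_compl, hS, Finset.mem_filter]
      rcases hx with rfl | rfl <;> simp
    have h2 : ({0, 1} : Finset F).card = 2 := by
      rw [Finset.card_insert_of_notMem (by simp), Finset.card_singleton]
    have := Finset.card_le_card hsub
    have := Finset.card_add_card_compl S
    omega
  have hVc : Vfᶜ.card ≤ W.card := Finset.card_le_card hcompl
  have hVfc : Vf.card + Vfᶜ.card = Fintype.card F := Finset.card_add_card_compl Vf
  ext a
  simp only [Set.mem_univ, iff_true]
  have hinter : (Vf ∩ Vf.image (fun v => a - v)).Nonempty := by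
    rw [← Finset.card_pos]
    have himg : (Vf.image (fun v => a - v)).card = Vf.card :=
      Finset.card_image_of_injective _ sub_right_injective
    have hui := Finset.card_union_add_card_inter Vf (Vf.image (fun v => a - v))
    have hle : (Vf ∪ Vf.image (fun v => a - v)).card ≤ Fintype.card F := Finset.card_le_univ _
    omega
  obtain ⟨v, hv⟩ := hinter
  rw [Finset.mem_inter] at hv
  obtain ⟨hv1, hv2⟩ := hv
  obtain ⟨w, hw, hwv⟩ := Finset.mem_image.mp hv2
  have ha : a = w + v := by rw [← hwv]; ring
  rw [ha]
  exact Set.add_mem_add (Set.mem_toFinset.mp hw) (Set.mem_toFinset.mp hv1)
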